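/- arXiv:1305.6012 — 2 statements merged into one kernel-verified Lean document; each statement's English description precedes it below -/
import Mathlib

section
/- Let Δ = diag(δ₁,…,δ_u) be a u×u real diagonal matrix with δ₁ ≥ … ≥ δ_u ≥ 0, and let Ω be a v×v Hermitian matrix (v ≥ u) with eigenvalues ω₁ ≥ … ≥ ω_v. Then for every matrix Θ ∈ ℂ^{v×u} with Θᴴ Θ = I_u, one has tr(Δ Θᴴ Ω Θ) ≥ Σ_{i=1}^{u} δ_i ω_{v-i+1}. -/
/-!
Diagonalise `Ω = U diag(e) Uᴴ` and put `N = Uᴴ Θ`. Then `tr(Δ Θᴴ Ω Θ) = ∑ᵢ δᵢ ∑ⱼ eⱼ |Nⱼᵢ|²`, and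
since `N` has orthonormal columns the weights `|Nⱼᵢ|²` have column sums `1` and row sums `≤ 1`.
By Abel summation against the antitone, nonnegative `δ` it suffices to compare partial sums over
the first `k + 1` columns: these put weights in `[0, 1]` of total mass `k + 1` on the eigenvalues,
and any such weighted sum is at least the sum of the `k + 1` smallest eigenvalues.
-/

open Matrix Finset
open scoped ComplexOrder

section Ordered

variable {R : Type*} [CommRing R] [LinearOrder R] [IsStrictOrderedRing R]

theorem Antitone.sum_filter_le_sum_mul {ι : Type*} [Fintype ι] [LinearOrder ι] {ω c : ι → R}
    (hω : Antitone ω) (hc0 : ∀ j, 0 ≤ c j) (hc1 : ∀ j, c j ≤ 1) (t : ι)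
    (hc : ∑ j, c j = #{j | t ≤ j}) :
    ∑ j with t ≤ j, ω j ≤ ∑ j, ω j * c j := by
  have hterm : ∀ j, 0 ≤ (ω j - ω t) * (c j - if t ≤ j then 1 else 0) := by
    intro j
    split_ifs with h
    · exact mul_nonneg_of_nonpos_of_nonpos (sub_nonpos.2 (hω h)) (sub_nonpos.2 (hc1 j))
    · exact mul_nonneg (sub_nonneg.2 (hω (le_of_not_ge h))) (by simpa using hc0 j)
  have hsum := sum_nonneg fun j (_ : j ∈ univ) => hterm j
  simp only [mul_sub, sub_mul, sum_sub_distrib, mul_ite, mul_one, mul_zero, ← sum_filter,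
    sum_const, nsmul_eq_mul] at hsum
  rw [← mul_sum, hc] at hsum
  linarith

theorem Antitone.sum_mul_le_sum_mul_of_sum_Iic_le {n : ℕ} {a x y : Fin n → R}
    (ha : Antitone a) (ha0 : ∀ i, 0 ≤ a i) (h : ∀ k, ∑ i ∈ Iic k, x i ≤ ∑ i ∈ Iic k, y i) :
    ∑ i, a i * x i ≤ ∑ i, a i * y i := by
  induction n with
  | zero => simp
  | succ n ih =>
    set b := a (Fin.last n)
    have hsplit : ∀ z : Fin (n + 1) → R, ∑ i, a i * z i =
        ∑ i : Fin n, (a i.castSucc - b) * z i.castSucc + b * ∑ i, z i := by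
      intro z
      rw [Fin.sum_univ_castSucc, Fin.sum_univ_castSucc (f := z), mul_add, mul_sum]
      simp only [b, sub_mul, sum_sub_distrib]
      ring
    have hinit : ∑ i : Fin n, (a i.castSucc - b) * x i.castSucc ≤
        ∑ i : Fin n, (a i.castSucc - b) * y i.castSucc :=
      ih (fun i j hij => sub_le_sub_right (ha (Fin.castSucc_le_castSucc_iff.2 hij)) _)
        (fun i => sub_nonneg.2 (ha (Fin.le_last _)))
        (fun k => by simpa only [Fin.sum_Iic_castSucc] using h k.castSucc)
    have htotal : ∑ i, x i ≤ ∑ i, y i := by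
      simpa [← Fin.top_eq_last, Iic_top] using h (Fin.last n)
    rw [hsplit x, hsplit y]
    gcongr
    exact ha0 _

theorem Fin.map_Iic_rev_castLE {u v : ℕ} (huv : u ≤ v) (k : Fin u) :
    (Iic k).map ((Fin.castLEEmb huv).trans Fin.revPerm.toEmbedding) =
      ({j | (k.castLE huv).rev ≤ j} : Finset (Fin v)) := by
  ext j
  simp only [mem_map, mem_Iic, mem_filter, mem_univ, true_and, Function.Embedding.trans_apply,
    Fin.castLEEmb_apply, Equiv.coe_toEmbedding, Fin.revPerm_apply]
  constructor
  · rintro ⟨i, hik, rfl⟩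
    exact Fin.rev_le_rev.2 hik
  · intro hj
    rw [Fin.le_def, Fin.val_rev, Fin.val_castLE] at hj
    refine ⟨⟨v - 1 - j, by omega⟩, Fin.le_def.2 (by simp only; omega), Fin.ext ?_⟩
    simp only [Fin.val_rev, Fin.val_castLE]
    omega

theorem Antitone.sum_mul_rev_castLE_le_sum_mul_sum_mul {u v : ℕ} (huv : u ≤ v)
    {δ : Fin u → R} (hδ : Antitone δ) (hδ0 : ∀ i, 0 ≤ δ i) {ω : Fin v → R} (hω : Antitone ω)
    {Q : Fin v → Fin u → R} (hQ0 : ∀ j i, 0 ≤ Q j i) (hcol : ∀ i, ∑ j, Q j i = 1)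
    (hrow : ∀ j, ∑ i, Q j i ≤ 1) :
    ∑ i, δ i * ω (i.castLE huv).rev ≤ ∑ i, δ i * ∑ j, ω j * Q j i := by
  refine hδ.sum_mul_le_sum_mul_of_sum_Iic_le hδ0 fun k => ?_
  have hmap := Fin.map_Iic_rev_castLE huv k
  have hsmallest : ∑ i ∈ Iic k, ω (i.castLE huv).rev =
      ∑ j with (k.castLE huv).rev ≤ j, ω j := by
    rw [← hmap, sum_map]
    rfl
  have hweighted : ∑ i ∈ Iic k, ∑ j, ω j * Q j i = ∑ j, ω j * ∑ i ∈ Iic k, Q j i := by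
    simp_rw [mul_sum]
    exact sum_comm
  rw [hsmallest, hweighted]
  refine hω.sum_filter_le_sum_mul (fun j => sum_nonneg fun i _ => hQ0 j i)
    (fun j => (sum_le_sum_of_subset_of_nonneg (subset_univ _) fun i _ _ => hQ0 j i).trans
      (hrow j)) _ ?_
  rw [sum_comm, sum_congr rfl fun i _ => hcol i, ← hmap, card_map]
  simp

end Ordered

section Unitary

variable {𝕜 : Type*} [RCLike 𝕜] {m n : Type*}

theorem Matrix.re_trace_diagonal_mul_conjTranspose_mul_diagonal_mul [Fintype m] [Fintype n]
    [DecidableEq m] [DecidableEq n] (d : n → ℝ) (e : m → ℝ) (N : Matrix m n 𝕜) :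
    RCLike.re (diagonal (fun i => (d i : 𝕜)) * Nᴴ * diagonal (fun j => (e j : 𝕜)) * N).trace =
      ∑ i, d i * ∑ j, e j * ‖N j i‖ ^ 2 := by
  simp only [trace, diag_apply, Matrix.mul_assoc, diagonal_mul, map_sum]
  refine sum_congr rfl fun i _ => ?_
  rw [mul_apply]
  simp only [diagonal_mul, conjTranspose_apply, mul_sum, map_sum]
  refine sum_congr rfl fun j _ => ?_
  rw [mul_left_comm (star _), RCLike.star_def, RCLike.conj_mul, ← RCLike.ofReal_pow,
    ← RCLike.ofReal_mul, ← RCLike.ofReal_mul, RCLike.ofReal_re]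

theorem Matrix.IsHermitian.exists_conjTranspose_mul_mul_eq [Fintype n] [DecidableEq n]
    {A : Matrix n n 𝕜} (hA : A.IsHermitian) (Θ : Matrix n m 𝕜) :
    ∃ N : Matrix n m 𝕜, Nᴴ * N = Θᴴ * Θ ∧
      Θᴴ * A * Θ = Nᴴ * diagonal (fun j => (hA.eigenvalues j : 𝕜)) * N := by
  set U : Matrix n n 𝕜 := ↑hA.eigenvectorUnitary
  have hUU : U * Uᴴ = 1 := Unitary.coe_mul_star_self _
  have hdiag : Uᴴ * A * U = diagonal (fun j => (hA.eigenvalues j : 𝕜)) := by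
    have := hA.conjStarAlgAut_star_eigenvectorUnitary
    rwa [Unitary.conjStarAlgAut_star_apply] at this
  refine ⟨Uᴴ * Θ, ?_, ?_⟩
  · rw [conjTranspose_mul, conjTranspose_conjTranspose, Matrix.mul_assoc, ← Matrix.mul_assoc U,
      hUU, Matrix.one_mul]
  · calc Θᴴ * A * Θ = Θᴴ * (U * Uᴴ) * A * ((U * Uᴴ) * Θ) := by
          rw [hUU, Matrix.mul_one, Matrix.one_mul]
      _ = _ := by
          simp only [← hdiag, conjTranspose_mul, conjTranspose_conjTranspose, Matrix.mul_assoc]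

theorem Matrix.IsHermitian.exists_re_trace_diagonal_mul_conjTranspose_mul_mul [Fintype m]
    [Fintype n] [DecidableEq m] [DecidableEq n] {A : Matrix n n 𝕜} (hA : A.IsHermitian)
    (d : m → ℝ) (Θ : Matrix n m 𝕜) :
    ∃ N : Matrix n m 𝕜, Nᴴ * N = Θᴴ * Θ ∧
      RCLike.re (diagonal (fun i => (d i : 𝕜)) * Θᴴ * A * Θ).trace =
        ∑ i, d i * ∑ j, hA.eigenvalues j * ‖N j i‖ ^ 2 := by
  obtain ⟨N, hN, hconj⟩ := hA.exists_conjTranspose_mul_mul_eq Θ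
  refine ⟨N, hN, ?_⟩
  rw [Matrix.mul_assoc _ Θᴴ, Matrix.mul_assoc _ (Θᴴ * A), hconj]
  simpa only [Matrix.mul_assoc] using re_trace_diagonal_mul_conjTranspose_mul_diagonal_mul d _ N

theorem Matrix.sum_norm_sq_apply_eq_one_of_conjTranspose_mul_self [Fintype m] [DecidableEq n]
    {N : Matrix m n 𝕜} (hN : Nᴴ * N = 1) (i : n) : ∑ j, ‖N j i‖ ^ 2 = 1 := by
  have h := congr_fun (congr_fun hN i) i
  simp only [mul_apply, conjTranspose_apply, RCLike.star_def, RCLike.conj_mul,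
    one_apply_eq] at h
  exact_mod_cast h

theorem Matrix.sum_norm_sq_apply_le_one_of_conjTranspose_mul_self [Fintype m] [Fintype n]
    [DecidableEq m] [DecidableEq n] {N : Matrix m n 𝕜} (hN : Nᴴ * N = 1) (j : m) :
    ∑ i, ‖N j i‖ ^ 2 ≤ 1 := by
  set P : Matrix m m 𝕜 := 1 - N * Nᴴ
  have hP : P = Pᴴ * P := by
    simp only [P, conjTranspose_sub, conjTranspose_one, conjTranspose_mul,
      conjTranspose_conjTranspose, sub_mul, mul_sub, Matrix.one_mul, Matrix.mul_one,
      Matrix.mul_assoc, ← Matrix.mul_assoc Nᴴ, hN]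
    abel
  have hjj : 0 ≤ P j j := hP ▸ (posSemidef_conjTranspose_mul_self P).diag_nonneg
  simp only [P, sub_apply, one_apply_eq, mul_apply, conjTranspose_apply, RCLike.star_def,
    RCLike.mul_conj] at hjj
  have : (0 : 𝕜) ≤ ((1 - ∑ i, ‖N j i‖ ^ 2 : ℝ) : 𝕜) := by
    push_cast
    exact hjj
  simpa using RCLike.ofReal_nonneg.1 this

end Unitary

/-- For Δ = diag(δ₁,…,δ_u) with δ₁ ≥ … ≥ δ_u ≥ 0, Ω a v×v Hermitian matrix
with eigenvalues ω₁ ≥ … ≥ ω_v, and any Θ with Θᴴ Θ = I_u,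
tr(Δ Θᴴ Ω Θ) ≥ Σ_{i=1}^u δ_i ω_{v-i+1}. -/
theorem stmt0 {u v : ℕ} (huv : u ≤ v)
    (δ : Fin u → ℝ) (hδ_mono : Antitone δ) (hδ_nonneg : ∀ i, 0 ≤ δ i)
    (Ω : Matrix (Fin v) (Fin v) ℂ) (hΩ : Ω.IsHermitian)
    (ω : Fin v → ℝ) (hω_mono : Antitone ω)
    (hω_eig : ∃ σ : Equiv.Perm (Fin v), ω = hΩ.eigenvalues ∘ σ)
    (Θ : Matrix (Fin v) (Fin u) ℂ) (hΘ : Θᴴ * Θ = 1) :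
    ∑ i : Fin u, δ i * ω ⟨v - 1 - i.1, by have := i.isLt; omega⟩ ≤
      ((Matrix.diagonal (fun i => (δ i : ℂ)) * Θᴴ * Ω * Θ).trace).re := by
  obtain ⟨σ, hσ⟩ := hω_eig
  obtain ⟨N, hN, htrace⟩ := hΩ.exists_re_trace_diagonal_mul_conjTranspose_mul_mul δ Θ
  rw [hΘ] at hN
  calc ∑ i : Fin u, δ i * ω ⟨v - 1 - i.1, _⟩ = ∑ i, δ i * ω (i.castLE huv).rev := by
        congr! 3 with i
        ext
        simp only [Fin.val_rev, Fin.val_castLE]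
        omega
    _ ≤ ∑ i, δ i * ∑ j, ω j * ‖N (σ j) i‖ ^ 2 :=
        hδ_mono.sum_mul_rev_castLE_le_sum_mul_sum_mul huv hδ_nonneg hω_mono
          (fun _ _ => by positivity)
          (fun i => (Equiv.sum_comp σ (fun j => ‖N j i‖ ^ 2)).trans
            (sum_norm_sq_apply_eq_one_of_conjTranspose_mul_self hN i))
          (fun j => sum_norm_sq_apply_le_one_of_conjTranspose_mul_self hN (σ j))
    _ = ∑ i, δ i * ∑ j, hΩ.eigenvalues j * ‖N j i‖ ^ 2 := by
        refine sum_congr rfl fun i _ => ?_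
        rw [hσ, ← Equiv.sum_comp σ (fun j => hΩ.eigenvalues j * ‖N j i‖ ^ 2)]
        rfl
    _ = _ := htrace.symm
end

section
/- Let Σ' = diag(ρ₁,…,ρ_d,0,…,0) be an m×m diagonal matrix with ρ₁ ≥ … ≥ ρ_d > 0, let Λ = diag(λ₁,…,λ_m) with λ₁ ≤ … ≤ λ_m real, and let C ∈ ℂ^{m×m} be skew-Hermitian. Then Σ_{i=1}^{d} ρ_i Σ_{j≠i} (λ_i − λ_j)|C_{ij}|² = Σ_{i=1}^{d-1} Σ_{j=i+1}^{d} (ρ_i − ρ_j)(λ_i − λ_j)|C_{ij}|² + Σ_{i=1}^{d} Σ_{j=d+1}^{m} ρ_i (λ_i − λ_j)|C_{ij}|², and this quantity is ≤ 0. -/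
open Matrix Finset

lemma pair_sum_aux {α : Type*} [LinearOrder α] [DecidableEq α] (A : Finset α) (f : α → α → ℝ)
    (hdiag : ∀ i, f i i = 0) :
    ∑ i ∈ A, ∑ j ∈ A, f i j
      = ∑ i ∈ A, ∑ j ∈ A.filter (fun j => i < j), (f i j + f j i) := by
  have key : ∀ i j : α, f i j
      = (if i < j then f i j else 0) + (if j < i then f i j else 0) := by
    intro i j
    rcases lt_trichotomy i j with h | h | h
    · simp [h, asymm h]
    · simp [h, hdiag]
    · simp [h, asymm h]
  calc ∑ i ∈ A, ∑ j ∈ A, f i j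
      = (∑ i ∈ A, ∑ j ∈ A, if i < j then f i j else 0)
          + ∑ i ∈ A, ∑ j ∈ A, if j < i then f i j else 0 := by
        rw [← Finset.sum_add_distrib]
        refine Finset.sum_congr rfl fun i _ => ?_
        rw [← Finset.sum_add_distrib]
        exact Finset.sum_congr rfl fun j _ => key i j
    _ = (∑ i ∈ A, ∑ j ∈ A, if i < j then f i j else 0)
          + ∑ i ∈ A, ∑ j ∈ A, if i < j then f j i else 0 := by
        rw [Finset.sum_comm (s := A) (t := A) (f := fun i j => if j < i then f i j else 0)]
    _ = ∑ i ∈ A, ∑ j ∈ A, if i < j then f i j + f j i else 0 := by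
        rw [← Finset.sum_add_distrib]
        refine Finset.sum_congr rfl fun i _ => ?_
        rw [← Finset.sum_add_distrib]
        refine Finset.sum_congr rfl fun j _ => ?_
        by_cases h : i < j <;> simp [h]
    _ = ∑ i ∈ A, ∑ j ∈ A.filter (fun j => i < j), (f i j + f j i) := by
        refine Finset.sum_congr rfl fun i _ => ?_
        rw [Finset.sum_filter]
/-- With ρ₁ ≥ … ≥ ρ_d > 0 (and ρ_i = 0 for i > d), λ₁ ≤ … ≤ λ_m real, and C
skew-Hermitian, Σ_{i=1}^d ρ_i Σ_{j≠i} (λ_i − λ_j)|C_{ij}|² equals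
Σ_{i=1}^{d-1} Σ_{j=i+1}^d (ρ_i − ρ_j)(λ_i − λ_j)|C_{ij}|²
+ Σ_{i=1}^d Σ_{j=d+1}^m ρ_i (λ_i − λ_j)|C_{ij}|², and this quantity is ≤ 0. -/
theorem stmt16 {m d : ℕ} (hdm : d ≤ m)
    (ρ : Fin m → ℝ) (hρ_mono : Antitone ρ)
    (hρ_pos : ∀ i : Fin m, i.1 < d → 0 < ρ i)
    (hρ_zero : ∀ i : Fin m, d ≤ i.1 → ρ i = 0)
    (lam : Fin m → ℝ) (hlam_mono : Monotone lam)
    (C : Matrix (Fin m) (Fin m) ℂ) (hC : Cᴴ = -C) :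
    (∑ i ∈ Finset.univ.filter (fun i : Fin m => i.1 < d),
        ρ i * ∑ j ∈ Finset.univ.erase i, (lam i - lam j) * ‖C i j‖ ^ 2)
      =
      (∑ i ∈ Finset.univ.filter (fun i : Fin m => i.1 < d),
          ∑ j ∈ Finset.univ.filter (fun j : Fin m => i.1 < j.1 ∧ j.1 < d),
            (ρ i - ρ j) * (lam i - lam j) * ‖C i j‖ ^ 2)
        +
        (∑ i ∈ Finset.univ.filter (fun i : Fin m => i.1 < d),
          ∑ j ∈ Finset.univ.filter (fun j : Fin m => d ≤ j.1),
            ρ i * (lam i - lam j) * ‖C i j‖ ^ 2) ∧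
    (∑ i ∈ Finset.univ.filter (fun i : Fin m => i.1 < d),
        ρ i * ∑ j ∈ Finset.univ.erase i, (lam i - lam j) * ‖C i j‖ ^ 2) ≤ 0 := by
  have hnorm : ∀ i j : Fin m, ‖C j i‖ = ‖C i j‖ := by
    intro i j
    have h1 : star (C j i) = -C i j := by
      have := congrFun (congrFun hC i) j
      simpa [Matrix.conjTranspose_apply] using this
    calc ‖C j i‖ = ‖star (C j i)‖ := (norm_star _).symm
      _ = ‖-C i j‖ := by rw [h1]
      _ = ‖C i j‖ := norm_neg _
  set A := Finset.univ.filter (fun i : Fin m => i.1 < d) with hA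
  set B := Finset.univ.filter (fun j : Fin m => d ≤ j.1) with hB
  set f : Fin m → Fin m → ℝ := fun i j => ρ i * ((lam i - lam j) * ‖C i j‖ ^ 2) with hf
  have hdiag : ∀ i, f i i = 0 := by intro i; simp [hf]
  have hsplit : ∀ i : Fin m, (∑ j ∈ Finset.univ.erase i, (lam i - lam j) * ‖C i j‖ ^ 2)
      = ∑ j : Fin m, (lam i - lam j) * ‖C i j‖ ^ 2 := by
    intro i
    exact Finset.sum_erase _ (by simp)
  have hLHS : (∑ i ∈ A, ρ i * ∑ j ∈ Finset.univ.erase i, (lam i - lam j) * ‖C i j‖ ^ 2)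
      = (∑ i ∈ A, ∑ j ∈ A, f i j) + ∑ i ∈ A, ∑ j ∈ B, f i j := by
    rw [← Finset.sum_add_distrib]
    refine Finset.sum_congr rfl fun i _ => ?_
    rw [hsplit i, Finset.mul_sum]
    have := Finset.sum_filter_add_sum_filter_not Finset.univ (fun j : Fin m => j.1 < d)
      (fun j => f i j)
    rw [← this]
    congr 1
    refine Finset.sum_congr ?_ fun _ _ => rfl
    simp [hB, not_lt]
  have hAB : ∀ i : Fin m, A.filter (fun j => i < j)
      = Finset.univ.filter (fun j : Fin m => i.1 < j.1 ∧ j.1 < d) := by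
    intro i
    ext j
    simp only [hA, Finset.mem_filter, Finset.mem_univ, true_and, Fin.lt_def]
    tauto
  have hfirst : (∑ i ∈ A, ∑ j ∈ A, f i j)
      = ∑ i ∈ A, ∑ j ∈ Finset.univ.filter (fun j : Fin m => i.1 < j.1 ∧ j.1 < d),
          (ρ i - ρ j) * (lam i - lam j) * ‖C i j‖ ^ 2 := by
    rw [pair_sum_aux A f hdiag]
    refine Finset.sum_congr rfl fun i _ => ?_
    rw [hAB i]
    refine Finset.sum_congr rfl fun j _ => ?_
    simp only [hf]
    rw [hnorm i j]
    ring
  have heq : (∑ i ∈ A, ρ i * ∑ j ∈ Finset.univ.erase i, (lam i - lam j) * ‖C i j‖ ^ 2)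
      = (∑ i ∈ A, ∑ j ∈ Finset.univ.filter (fun j : Fin m => i.1 < j.1 ∧ j.1 < d),
            (ρ i - ρ j) * (lam i - lam j) * ‖C i j‖ ^ 2)
        + ∑ i ∈ A, ∑ j ∈ B, ρ i * (lam i - lam j) * ‖C i j‖ ^ 2 := by
    rw [hLHS, hfirst]
    congr 1
    refine Finset.sum_congr rfl fun i _ => Finset.sum_congr rfl fun j _ => ?_
    simp only [hf]; ring
  refine ⟨heq, ?_⟩
  rw [heq]
  have h1 : (∑ i ∈ A, ∑ j ∈ Finset.univ.filter (fun j : Fin m => i.1 < j.1 ∧ j.1 < d),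
      (ρ i - ρ j) * (lam i - lam j) * ‖C i j‖ ^ 2) ≤ 0 := by
    refine Finset.sum_nonpos fun i _ => Finset.sum_nonpos fun j hj => ?_
    simp only [Finset.mem_filter] at hj
    have hij : i ≤ j := le_of_lt (Fin.lt_def.mpr hj.2.1)
    have hρ : 0 ≤ ρ i - ρ j := sub_nonneg.mpr (hρ_mono hij)
    have hlm : lam i - lam j ≤ 0 := sub_nonpos.mpr (hlam_mono hij)
    have hsq : (0:ℝ) ≤ ‖C i j‖ ^ 2 := by positivity
    nlinarith [mul_nonneg hρ hsq]
  have h2 : (∑ i ∈ A, ∑ j ∈ B, ρ i * (lam i - lam j) * ‖C i j‖ ^ 2) ≤ 0 := by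
    refine Finset.sum_nonpos fun i hi => Finset.sum_nonpos fun j hj => ?_
    simp only [hA, hB, Finset.mem_filter] at hi hj
    have hij : i ≤ j := le_of_lt (Fin.lt_def.mpr (lt_of_lt_of_le hi.2 hj.2))
    have hρ : 0 ≤ ρ i := le_of_lt (hρ_pos i hi.2)
    have hlm : lam i - lam j ≤ 0 := sub_nonpos.mpr (hlam_mono hij)
    have hsq : (0:ℝ) ≤ ‖C i j‖ ^ 2 := by positivity
    nlinarith [mul_nonneg hρ hsq]
  linarith
end
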